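/- arXiv:1211.3006 — 2 statements merged into one kernel-verified Lean document; each statement's English description precedes it below -/
import Mathlib

section
/- Let k ≥ 1. Define for (x,y) ∈ ℤ² the slot assignment t(x,y) = (x mod (k+1)) + (k+1)·(y mod (k+1)). If two distinct hexagonal lattice points (x1,y1) and (x2,y2) satisfy t(x1,y1) = t(x2,y2), then for any point q at hexagonal graph distance 1 from (x1,y1), the hexagonal graph distance from (x2,y2) to q is at least k. -/
/-- Hexagonal graph distance: for difference (dx,dy) it is max{|dx|,|dy|,|dx-dy|}. -/
def hexDist (p q : ℤ × ℤ) : ℤ :=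
  max |q.1 - p.1| (max |q.2 - p.2| |(q.1 - p.1) - (q.2 - p.2)|)

/-- Slot assignment of Algorithm 1 (`%` is `Int.emod`, giving the representative
in `{0, …, k}` since `k + 1 > 0`). -/
def hexSlot (k : ℤ) (p : ℤ × ℤ) : ℤ :=
  p.1 % (k + 1) + (k + 1) * (p.2 % (k + 1))


lemma hexDist_triangle (p q r : ℤ × ℤ) : hexDist p r ≤ hexDist p q + hexDist q r := by
  simp only [hexDist]
  have h1 : |r.1 - p.1| ≤ |q.1 - p.1| + |r.1 - q.1| := by
    have := abs_sub_le (r.1) (q.1) (p.1); linarith [abs_sub_comm r.1 q.1]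
  have h2 : |r.2 - p.2| ≤ |q.2 - p.2| + |r.2 - q.2| := by
    have := abs_sub_le (r.2) (q.2) (p.2); linarith [abs_sub_comm r.2 q.2]
  have h3 : |(r.1 - p.1) - (r.2 - p.2)| ≤ |(q.1 - p.1) - (q.2 - p.2)| + |(r.1 - q.1) - (r.2 - q.2)| := by
    have := abs_add_le ((q.1 - p.1) - (q.2 - p.2)) ((r.1 - q.1) - (r.2 - q.2))
    have e : (r.1 - p.1) - (r.2 - p.2) = ((q.1 - p.1) - (q.2 - p.2)) + ((r.1 - q.1) - (r.2 - q.2)) := by ring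
    rw [e]; exact this
  apply max_le
  · exact h1.trans (add_le_add (le_max_left _ _) (le_max_left _ _))
  apply max_le
  · exact h2.trans (add_le_add ((le_max_left _ _).trans (le_max_right _ _)) ((le_max_left _ _).trans (le_max_right _ _)))
  · exact h3.trans (add_le_add ((le_max_right _ _).trans (le_max_right _ _)) ((le_max_right _ _).trans (le_max_right _ _)))

lemma hexDist_comm (p q : ℤ × ℤ) : hexDist p q = hexDist q p := by
  simp only [hexDist, abs_sub_comm q.1 p.1, abs_sub_comm q.2 p.2]
  congr 2
  rw [show (q.1 - p.1) - (q.2 - p.2) = -((p.1 - q.1) - (p.2 - q.2)) by ring, abs_neg]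

theorem hex_schedule_collision_free (k : ℤ) (hk : 1 ≤ k)
    (p1 p2 : ℤ × ℤ) (hne : p1 ≠ p2) (hslot : hexSlot k p1 = hexSlot k p2)
    (q : ℤ × ℤ) (hq : hexDist p1 q = 1) :
    k ≤ hexDist p2 q := by
  set n := k + 1 with hn
  have hn0 : 0 < n := by omega
  have ha1 := Int.emod_nonneg p1.1 (by omega : n ≠ 0)
  have hb1 := Int.emod_lt_of_pos p1.1 hn0
  have ha2 := Int.emod_nonneg p2.1 (by omega : n ≠ 0)
  have hb2 := Int.emod_lt_of_pos p2.1 hn0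
  have key : p1.1 % n = p2.1 % n ∧ p1.2 % n = p2.2 % n := by
    simp only [hexSlot, ← hn] at hslot
    set m := p2.2 % n - p1.2 % n with hm
    have heq : p1.1 % n - p2.1 % n = n * m := by rw [hm]; linear_combination hslot
    have hm0 : m = 0 := by
      rcases lt_trichotomy m 0 with h | h | h
      · have h2 : n * m ≤ -n := by
          have := mul_le_mul_of_nonneg_left (show m ≤ -1 by omega) (le_of_lt hn0)
          linarith
        omega
      · exact h
      · have h2 : n ≤ n * m := by
          have := mul_le_mul_of_nonneg_left (show (1:ℤ) ≤ m by omega) (le_of_lt hn0)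
          linarith
        omega
    rw [hm0, mul_zero] at heq
    constructor
    · omega
    · omega
  have hd1 : n ∣ p2.1 - p1.1 := Int.ModEq.dvd key.1
  have hd2 : n ∣ p2.2 - p1.2 := Int.ModEq.dvd key.2
  have hdist : n ≤ hexDist p1 p2 := by
    have hcases : p2.1 - p1.1 ≠ 0 ∨ p2.2 - p1.2 ≠ 0 := by
      by_contra h
      push_neg at h
      exact hne (Prod.ext (by omega) (by omega))
    rcases hcases with h | h
    · have : n ≤ |p2.1 - p1.1| :=
        Int.le_of_dvd (abs_pos.mpr h) ((dvd_abs _ _).mpr hd1)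
      exact this.trans (le_max_left _ _)
    · have : n ≤ |p2.2 - p1.2| :=
        Int.le_of_dvd (abs_pos.mpr h) ((dvd_abs _ _).mpr hd2)
      exact this.trans ((le_max_left _ _).trans (le_max_right _ _))
  have htri := hexDist_triangle p1 q p2
  rw [hexDist_comm q p2] at htri
  omega
end

section
/- Let k ≥ 1 and set u = v = ⌈(k+1)/2⌉. If two distinct points of ℤ² differ by an integer combination m·(k+1, 0) + n·(u, v) (with (m,n) ≠ (0,0)), then the L1 distance from either of them to any of the four L1-neighbors of the other is at least k. -/
/-!
Every nonzero vector `m • (a, 0) + n • (u, u)` of the lattice has L1 norm at least `a = k + 1`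
as soon as `a ≤ 2u`: for `m = 0` it is `2|n|u`, otherwise the first coordinate alone loses at most
`|nu|` from `|m|a`, which the second coordinate gives back. A neighbor of one of two such points
is therefore at L1 distance at least `k` from the other, by the triangle inequality.
-/

def l1Dist (p q : ℤ × ℤ) : ℤ := |p.1 - q.1| + |p.2 - q.2|

lemma l1Dist_comm (p q : ℤ × ℤ) : l1Dist p q = l1Dist q p := by
  simp only [l1Dist, abs_sub_comm]

lemma l1Dist_triangle (p q r : ℤ × ℤ) : l1Dist p r ≤ l1Dist p q + l1Dist q r := by
  have h₁ := abs_sub_le p.1 q.1 r.1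
  have h₂ := abs_sub_le p.2 q.2 r.2
  unfold l1Dist
  linarith

lemma le_l1Dist_of_l1Dist_eq_one {d : ℤ} {p q r : ℤ × ℤ} (hpr : d + 1 ≤ l1Dist p r)
    (hqp : l1Dist q p = 1) : d ≤ l1Dist q r := by
  have := l1Dist_triangle p q r
  rw [l1Dist_comm p q, hqp] at this
  linarith

lemma l1Dist_eq_of_sub_eq {p q : ℤ × ℤ} {x y : ℤ} (h : p - q = (x, y)) :
    l1Dist p q = |x| + |y| := by
  rw [l1Dist, ← Prod.fst_sub, ← Prod.snd_sub, h]

lemma le_abs_mul_add_mul_add_abs_mul {a u m n : ℤ} (ha : 0 ≤ a) (hau : a ≤ 2 * u)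
    (hmn : (m, n) ≠ (0, 0)) : a ≤ |m * a + n * u| + |n * u| := by
  have hu : 0 ≤ u := by omega
  rcases eq_or_ne m 0 with rfl | hm
  · have hn : 1 ≤ |n| := Int.one_le_abs fun hn => hmn (by rw [hn])
    rw [zero_mul, zero_add, abs_mul, abs_of_nonneg hu]
    nlinarith
  · have hma : a ≤ |m * a| := by
      rw [abs_mul, abs_of_nonneg ha]
      nlinarith [Int.one_le_abs hm]
    have := abs_sub_abs_le_abs_add (m * a) (n * u)
    linarith

lemma le_two_mul_ceil_half (a : ℤ) : a ≤ 2 * ⌈(a : ℚ) / 2⌉ := by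
  have := Int.le_ceil ((a : ℚ) / 2)
  exact_mod_cast (by linarith : (a : ℚ) ≤ 2 * ⌈(a : ℚ) / 2⌉)

theorem square_schedule_collision_free (k : ℤ) (hk : 1 ≤ k)
    (u : ℤ) (hu : u = ⌈((k : ℚ) + 1) / 2⌉)
    (p1 p2 : ℤ × ℤ) (m n : ℤ) (hmn : (m, n) ≠ (0, 0))
    (hdiff : p2 - p1 = (m * (k + 1) + n * u, n * u)) :
    (∀ q : ℤ × ℤ, |q.1 - p2.1| + |q.2 - p2.2| = 1 →
        k ≤ |q.1 - p1.1| + |q.2 - p1.2|) ∧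
    (∀ q : ℤ × ℤ, |q.1 - p1.1| + |q.2 - p1.2| = 1 →
        k ≤ |q.1 - p2.1| + |q.2 - p2.2|) := by
  have hku : k + 1 ≤ 2 * u := by
    simpa [hu] using le_two_mul_ceil_half (k + 1)
  have hfar : k + 1 ≤ l1Dist p2 p1 := by
    rw [l1Dist_eq_of_sub_eq hdiff]
    exact le_abs_mul_add_mul_add_abs_mul (by omega) hku hmn
  exact ⟨fun q hq => le_l1Dist_of_l1Dist_eq_one hfar hq,
    fun q hq => le_l1Dist_of_l1Dist_eq_one (l1Dist_comm p2 p1 ▸ hfar) hq⟩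
end
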